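/- arXiv:2506.01473 — 4 statements merged into one kernel-verified Lean document; each statement's English description precedes it below -/
import Mathlib

section
/- Let θ>0 and β>0, and let X be a random variable with probability density f(x;θ,β)=(1/θ)(1+βx/θ)^{−1/β−1} on (0,∞). Then for every t>0, E[((β+1)/(θ+βX))·min(X,t)] = 1−(1+βt/θ)^{−1/β}, i.e. the expectation equals the GPD cumulative distribution function F(t;θ,β). -/
/-!
The density satisfies `f' = -((β + 1) / (θ + β x)) f`, so the expectation is
`∫ min(x, t) (-f'(x)) dx`; integrating by parts against `min(x, t)`, whose derivative is the
indicator of `(0, t)`, leaves `∫₀ᵗ f = F(t)`. Concretely, `F(x) - x f(x)` is an antiderivative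
of the integrand on `(0, t]` and `-t f(x)` one on `(t, ∞)`, where `f` vanishes at infinity.
-/

open MeasureTheory Set Filter Topology

noncomputable def gpdPDF (θ β x : ℝ) : ℝ := 1 / θ * (1 + β * x / θ) ^ (-1 / β - 1)

noncomputable def gpdCDF (θ β x : ℝ) : ℝ := 1 - (1 + β * x / θ) ^ (-1 / β)

section

variable {θ β x t a : ℝ}

lemma add_mul_pos_of_mem_Icc (hθ : 0 < θ) (ht : 0 < θ + β * t) (hx : x ∈ Icc 0 t) :
    0 < θ + β * x := by
  rcases le_total 0 β with hβ | hβ <;> nlinarith [hx.1, hx.2]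

lemma add_mul_pos_of_le (hβ : 0 ≤ β) (ha : 0 < θ + β * a) (hx : a ≤ x) :
    0 < θ + β * x := by
  nlinarith

lemma one_add_mul_div_pos (hθ : 0 < θ) (hx : 0 < θ + β * x) : 0 < 1 + β * x / θ := by
  have h : 1 + β * x / θ = (θ + β * x) / θ := by field_simp
  rw [h]
  positivity

@[simp] lemma gpdCDF_zero : gpdCDF θ β 0 = 0 := by
  simp [gpdCDF]

lemma gpdPDF_nonneg (hθ : 0 ≤ θ) (hx : 0 ≤ 1 + β * x / θ) : 0 ≤ gpdPDF θ β x := by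
  unfold gpdPDF
  positivity

lemma hasDerivAt_one_add_mul_div :
    HasDerivAt (fun y => 1 + β * y / θ) (β / θ) x := by
  simpa using (((hasDerivAt_id x).const_mul β).div_const θ).const_add 1

lemma hasDerivAt_gpdCDF (hβ : β ≠ 0) (hx : 1 + β * x / θ ≠ 0) :
    HasDerivAt (gpdCDF θ β) (gpdPDF θ β x) x := by
  have h : HasDerivAt (gpdCDF θ β) _ x :=
    (hasDerivAt_one_add_mul_div.rpow_const (p := -1 / β) (Or.inl hx)).const_sub 1
  refine h.congr_deriv ?_
  unfold gpdPDF
  field_simp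

lemma hasDerivAt_gpdPDF (hθ : θ ≠ 0) (hβ : β ≠ 0) (hx : 1 + β * x / θ ≠ 0) :
    HasDerivAt (gpdPDF θ β) (-((β + 1) / (θ + β * x) * gpdPDF θ β x)) x := by
  have h : HasDerivAt (gpdPDF θ β) _ x :=
    (hasDerivAt_one_add_mul_div.rpow_const (p := -1 / β - 1) (Or.inl hx)).const_mul (1 / θ)
  refine h.congr_deriv ?_
  have hsplit : (1 + β * x / θ) ^ (-1 / β - 1) =
      (1 + β * x / θ) ^ (-1 / β - 1 - 1) * (1 + β * x / θ) := by
    rw [← Real.rpow_add_one hx]; ring_nf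
  have hden : θ + β * x ≠ 0 := by
    contrapose! hx
    field_simp
    linarith
  unfold gpdPDF
  rw [hsplit]
  generalize (1 + β * x / θ) ^ (-1 / β - 1 - 1) = A
  field_simp
  ring

lemma hasDerivAt_neg_gpdPDF (hθ : θ ≠ 0) (hβ : β ≠ 0) (hx : 1 + β * x / θ ≠ 0) :
    HasDerivAt (-gpdPDF θ β) ((β + 1) / (θ + β * x) * gpdPDF θ β x) x := by
  simpa only [neg_neg] using (hasDerivAt_gpdPDF hθ hβ hx).neg

lemma hasDerivAt_neg_gpdPDF_of_le (hθ : 0 < θ) (hβ : 0 < β) (ha : 0 < θ + β * a)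
    (hx : a ≤ x) :
    HasDerivAt (-gpdPDF θ β) ((β + 1) / (θ + β * x) * gpdPDF θ β x) x :=
  hasDerivAt_neg_gpdPDF hθ.ne' hβ.ne'
    (one_add_mul_div_pos hθ (add_mul_pos_of_le hβ.le ha hx)).ne'

lemma tendsto_gpdPDF_atTop (hθ : 0 < θ) (hβ : 0 < β) :
    Tendsto (gpdPDF θ β) atTop (𝓝 0) := by
  have hbase : Tendsto (fun y : ℝ => 1 + β * y / θ) atTop atTop :=
    tendsto_atTop_add_const_left _ _ ((tendsto_id.const_mul_atTop hβ).atTop_div_const hθ)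
  have hpow : Tendsto (fun s : ℝ => s ^ (-1 / β - 1)) atTop (𝓝 0) := by
    convert tendsto_rpow_neg_atTop (by positivity : 0 < 1 / β + 1) using 2
    ring_nf
  have h := (hpow.comp hbase).const_mul (1 / θ)
  rwa [mul_zero] at h

lemma integrableOn_Ioc_mul_div_mul_gpdPDF (hθ : 0 < θ) (hβ : β ≠ 0) (ht : 0 < θ + β * t) :
    IntegrableOn (fun x => x * ((β + 1) / (θ + β * x) * gpdPDF θ β x)) (Ioc 0 t) := by
  refine (ContinuousOn.integrableOn_Icc fun x hx => ?_).mono_set Ioc_subset_Icc_self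
  have hx' := add_mul_pos_of_mem_Icc hθ ht hx
  have hden : ContinuousAt (fun y => θ + β * y) x := by fun_prop
  have hpdf := (hasDerivAt_gpdPDF hθ.ne' hβ (one_add_mul_div_pos hθ hx').ne').continuousAt
  exact (continuousAt_id.mul ((continuousAt_const.div hden hx'.ne').mul hpdf)).continuousWithinAt

lemma integral_Ioc_mul_div_mul_gpdPDF (hθ : 0 < θ) (hβ : β ≠ 0) (h0t : 0 ≤ t)
    (ht : 0 < θ + β * t) :
    ∫ x in Ioc 0 t, x * ((β + 1) / (θ + β * x) * gpdPDF θ β x) =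
      gpdCDF θ β t - t * gpdPDF θ β t := by
  have hderiv : ∀ x ∈ uIcc 0 t, HasDerivAt (fun y => gpdCDF θ β y - y * gpdPDF θ β y)
      (x * ((β + 1) / (θ + β * x) * gpdPDF θ β x)) x := by
    intro x hx
    rw [uIcc_of_le h0t] at hx
    have hx' := (one_add_mul_div_pos hθ (add_mul_pos_of_mem_Icc hθ ht hx)).ne'
    refine ((hasDerivAt_gpdCDF hβ hx').sub ((hasDerivAt_id x).mul
      (hasDerivAt_gpdPDF hθ.ne' hβ hx'))).congr_deriv ?_
    simp only [id]
    ring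
  have hint := (intervalIntegrable_iff_integrableOn_Ioc_of_le h0t).2
    (integrableOn_Ioc_mul_div_mul_gpdPDF hθ hβ ht)
  rw [← intervalIntegral.integral_of_le h0t,
    intervalIntegral.integral_eq_sub_of_hasDerivAt hderiv hint]
  simp

lemma integrableOn_Ioi_div_mul_gpdPDF (hθ : 0 < θ) (hβ : 0 < β) (ha : 0 < θ + β * a) :
    IntegrableOn (fun x => (β + 1) / (θ + β * x) * gpdPDF θ β x) (Ioi a) := by
  refine integrableOn_Ioi_deriv_of_nonneg' (fun x hx => hasDerivAt_neg_gpdPDF_of_le hθ hβ ha hx)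
    (fun x hx => ?_) (tendsto_gpdPDF_atTop hθ hβ).neg
  have hx' := add_mul_pos_of_le hβ.le ha (mem_Ioi.1 hx).le
  exact mul_nonneg (by positivity) (gpdPDF_nonneg hθ.le (one_add_mul_div_pos hθ hx').le)

lemma integral_Ioi_div_mul_gpdPDF (hθ : 0 < θ) (hβ : 0 < β) (ha : 0 < θ + β * a) :
    ∫ x in Ioi a, (β + 1) / (θ + β * x) * gpdPDF θ β x = gpdPDF θ β a := by
  rw [integral_Ioi_of_hasDerivAt_of_tendsto' (fun x hx => hasDerivAt_neg_gpdPDF_of_le hθ hβ ha hx)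
    (integrableOn_Ioi_div_mul_gpdPDF hθ hβ ha) (tendsto_gpdPDF_atTop hθ hβ).neg]
  simp

end

/-- **Stein-type identity for the GPD with positive shape parameter.**
For `θ > 0`, `β > 0` and the GPD density `f(x;θ,β) = (1/θ)(1+βx/θ)^(-1/β-1)` on `(0,∞)`,
the expectation `E[((β+1)/(θ+βX))·min(X,t)]` equals the GPD CDF `1-(1+βt/θ)^(-1/β)`
for every `t > 0`. -/
theorem gpd_stein_identity_pos_shape (θ β : ℝ) (hθ : 0 < θ) (hβ : 0 < β)
    (t : ℝ) (ht : 0 < t) :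
    ∫ x in Ioi (0 : ℝ),
        ((β + 1) / (θ + β * x)) * min x t * ((1 / θ) * (1 + β * x / θ) ^ (-1 / β - 1)) =
      1 - (1 + β * t / θ) ^ (-1 / β) := by
  show ∫ x in Ioi 0, (β + 1) / (θ + β * x) * min x t * gpdPDF θ β x = gpdCDF θ β t
  have hsupp : 0 < θ + β * t := by positivity
  have hIoc : EqOn (fun x => (β + 1) / (θ + β * x) * min x t * gpdPDF θ β x)
      (fun x => x * ((β + 1) / (θ + β * x) * gpdPDF θ β x)) (Ioc 0 t) := fun x hx => by
    simp only [min_eq_left hx.2]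
    ring
  have hIoi : EqOn (fun x => (β + 1) / (θ + β * x) * min x t * gpdPDF θ β x)
      (fun x => t * ((β + 1) / (θ + β * x) * gpdPDF θ β x)) (Ioi t) := fun x hx => by
    simp only [min_eq_right (mem_Ioi.1 hx).le]
    ring
  rw [← Ioc_union_Ioi_eq_Ioi ht.le, setIntegral_union (Ioc_disjoint_Ioi le_rfl) measurableSet_Ioi
    ((integrableOn_Ioc_mul_div_mul_gpdPDF hθ hβ.ne' hsupp).congr_fun hIoc.symm measurableSet_Ioc)
    (IntegrableOn.congr_fun ((integrableOn_Ioi_div_mul_gpdPDF hθ hβ hsupp).const_mul t) hIoi.symm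
      measurableSet_Ioi),
    setIntegral_congr_fun measurableSet_Ioc hIoc, setIntegral_congr_fun measurableSet_Ioi hIoi,
    integral_const_mul, integral_Ioc_mul_div_mul_gpdPDF hθ hβ.ne' ht.le hsupp,
    integral_Ioi_div_mul_gpdPDF hθ hβ hsupp]
  ring
end

section
/- Let θ>0 and β<2 with β≠0, and let X have the generalized Pareto distribution GPD(θ,β) with survival function F̄(x)=(1+βx/θ)^{−1/β} and hazard rate h_F(t)=f(t;θ,β)/F̄(t). Then for every t in the interior of the support, the product J_s(X;t)·h_F(t) equals the constant 1/(2(β−2)). In particular h_F(t)=1/(θ+βt). -/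
/-!
Write `u x = 1 + β x / θ`, so that `F̄(x)² = u(x)^(-2/β)`, a power of an affine function. Its
antiderivative `u^(1-2/β) / ((β/θ)(1-2/β))` vanishes at the right end of the support: at `∞`
because `1 - 2/β < 0` when `0 < β < 2`, and at `-θ/β` because `1 - 2/β > 0` when `β < 0`.
Hence `∫_t (F̄(x)/F̄(t))² dx = θ u(t) / (2 - β) = (θ + βt)/(2 - β)`, while `h_F(t) = 1/(θ + βt)`;
the factor `θ + βt` cancels in the product.
-/

open MeasureTheory Set Filter Topology

section AffinePower

variable {c d p t : ℝ}

theorem hasDerivAt_affine_rpow_div (hc : c ≠ 0) (hp : p + 1 ≠ 0) {x : ℝ} (hx : c * x + d ≠ 0) :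
    HasDerivAt (fun y => (c * y + d) ^ (p + 1) / (c * (p + 1))) ((c * x + d) ^ p) x := by
  have hlin : HasDerivAt (fun y => c * y + d) c x := by
    simpa using ((hasDerivAt_id x).const_mul c).add_const d
  refine (((Real.hasDerivAt_rpow_const (p := p + 1) (Or.inl hx)).comp x hlin).div_const
    (c * (p + 1))).congr_deriv ?_
  rw [add_sub_cancel_right]
  field_simp

theorem integral_Ioi_affine_rpow (hc : 0 < c) (hp : p < -1) (ht : 0 < c * t + d) :
    ∫ x in Ioi t, (c * x + d) ^ p = -(c * t + d) ^ (p + 1) / (c * (p + 1)) := by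
  have hpos : ∀ x ∈ Ioi t, 0 < c * x + d := fun x hx => by
    nlinarith [mem_Ioi.mp hx]
  have hderiv : ∀ x ∈ Ici t, HasDerivAt (fun y => (c * y + d) ^ (p + 1) / (c * (p + 1)))
      ((c * x + d) ^ p) x := fun x hx => by
    refine hasDerivAt_affine_rpow_div hc.ne' (by linarith) (ne_of_gt ?_)
    nlinarith [mem_Ici.mp hx]
  have hlim : Tendsto (fun y => (c * y + d) ^ (p + 1) / (c * (p + 1))) atTop (𝓝 0) := by
    have hlin : Tendsto (fun y => c * y + d) atTop atTop :=
      tendsto_atTop_add_const_right _ d (tendsto_id.const_mul_atTop hc)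
    simpa using ((tendsto_rpow_neg_atTop (y := -(p + 1)) (by linarith)).comp hlin).div_const
      (c * (p + 1))
  rw [integral_Ioi_of_hasDerivAt_of_nonneg' hderiv
    (fun x hx => (Real.rpow_pos_of_pos (hpos x hx) p).le) hlim, zero_sub, neg_div]

theorem integral_Ioo_affine_rpow (hc : c < 0) (hp : -1 < p) (ht : t < -d / c) :
    ∫ x in Ioo t (-d / c), (c * x + d) ^ p = -(c * t + d) ^ (p + 1) / (c * (p + 1)) := by
  rw [← integral_Ioc_eq_integral_Ioo, ← intervalIntegral.integral_of_le ht.le,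
    intervalIntegral.integral_comp_mul_add (fun y => y ^ p) hc.ne, integral_rpow (Or.inl hp),
    show c * (-d / c) + d = 0 by rw [mul_div_cancel₀ _ hc.ne, neg_add_cancel],
    Real.zero_rpow (by linarith), smul_eq_mul]
  field_simp
  ring

end AffinePower

theorem rpow_div_rpow_sq {x y : ℝ} (hx : 0 ≤ x) (hy : 0 ≤ y) (p : ℝ) :
    (x ^ p / y ^ p) ^ 2 = x ^ (2 * p) / y ^ (2 * p) := by
  rw [div_pow, mul_comm, Real.rpow_mul hx, Real.rpow_mul hy, Real.rpow_two, Real.rpow_two]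

section GeneralizedPareto

variable {θ β t : ℝ}

theorem gpd_hazard_rate (hθ : θ ≠ 0) (hu : 0 < 1 + β * t / θ) :
    ((1 / θ) * (1 + β * t / θ) ^ (-1 / β - 1)) / (1 + β * t / θ) ^ (-1 / β) =
      1 / (θ + β * t) := by
  have hθβt : θ + β * t = θ * (1 + β * t / θ) := by field_simp
  have hc : (1 + β * t / θ) ^ (-1 / β) ≠ 0 := (Real.rpow_pos_of_pos hu _).ne'
  rw [Real.rpow_sub hu, Real.rpow_one, hθβt]
  generalize (1 + β * t / θ) ^ (-1 / β) = c at hc ⊢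
  generalize 1 + β * t / θ = u at hu ⊢
  field_simp

theorem one_add_mul_div_pos_of_lt_neg_div (hθ : 0 < θ) (hβ : β < 0) (ht : t < -θ / β) :
    0 < 1 + β * t / θ := by
  have hβt : -θ < t * β := (lt_div_iff_of_neg hβ).mp ht
  rw [show 1 + β * t / θ = (θ + β * t) / θ by field_simp]
  exact div_pos (by linarith) hθ

theorem one_add_mul_div_pos_of_mem_gpd_support (hθ : 0 < θ) (hu : 0 < 1 + β * t / θ) {x : ℝ}
    (hx : x ∈ if 0 < β then Ioi t else Ioo t (-θ / β)) : 0 < 1 + β * x / θ := by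
  split_ifs at hx with hβ
  · have : β * t / θ < β * x / θ := by gcongr; exact hx
    linarith
  · rcases (not_lt.mp hβ).eq_or_lt with rfl | hneg
    · simp
    · exact one_add_mul_div_pos_of_lt_neg_div hθ hneg hx.2

theorem integral_gpd_support_rpow (hθ : 0 < θ) (hβ0 : β ≠ 0) (hβ2 : β < 2)
    (hu : 0 < 1 + β * t / θ) :
    ∫ x in (if 0 < β then Ioi t else Ioo t (-θ / β)), (1 + β * x / θ) ^ (-2 / β) =
      -(1 + β * t / θ) ^ (-2 / β + 1) / (β / θ * (-2 / β + 1)) := by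
  have haffine : ∀ x, 1 + β * x / θ = β / θ * x + 1 := fun x => by ring
  simp_rw [haffine] at hu ⊢
  split_ifs with hβ
  · refine integral_Ioi_affine_rpow (div_pos hβ hθ) ?_ hu
    rw [neg_div, neg_lt_neg_iff, one_lt_div hβ]
    exact hβ2
  · have hneg : β < 0 := lt_of_le_of_ne (not_lt.mp hβ) hβ0
    have hc : β / θ < 0 := div_neg_of_neg_of_pos hneg hθ
    rw [show -θ / β = -1 / (β / θ) by field_simp]
    refine integral_Ioo_affine_rpow hc ?_ ((lt_div_iff_of_neg hc).mpr (by linarith))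
    have : 0 < -2 / β := div_pos_of_neg_of_neg (by norm_num) hneg
    linarith

theorem integral_gpd_survival_ratio_sq (hθ : 0 < θ) (hβ0 : β ≠ 0) (hβ2 : β < 2)
    (hu : 0 < 1 + β * t / θ) :
    ∫ x in (if 0 < β then Ioi t else Ioo t (-θ / β)),
        ((1 + β * x / θ) ^ (-1 / β) / (1 + β * t / θ) ^ (-1 / β)) ^ 2 =
      (θ + β * t) / (2 - β) := by
  have hS : MeasurableSet (if 0 < β then Ioi t else Ioo t (-θ / β)) := by
    split_ifs
    exacts [measurableSet_Ioi, measurableSet_Ioo]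
  have hexp : 2 * (-1 / β) = -2 / β := by ring
  calc ∫ x in (if 0 < β then Ioi t else Ioo t (-θ / β)),
        ((1 + β * x / θ) ^ (-1 / β) / (1 + β * t / θ) ^ (-1 / β)) ^ 2
      = ∫ x in (if 0 < β then Ioi t else Ioo t (-θ / β)),
          (1 + β * x / θ) ^ (-2 / β) / (1 + β * t / θ) ^ (-2 / β) :=
        setIntegral_congr_fun hS fun x hx => by
          rw [rpow_div_rpow_sq (one_add_mul_div_pos_of_mem_gpd_support hθ hu hx).le hu.le, hexp]
    _ = (∫ x in (if 0 < β then Ioi t else Ioo t (-θ / β)), (1 + β * x / θ) ^ (-2 / β)) /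
          (1 + β * t / θ) ^ (-2 / β) := integral_div _ _
    _ = (θ + β * t) / (2 - β) := by
      have hc : (1 + β * t / θ) ^ (-2 / β) ≠ 0 := (Real.rpow_pos_of_pos hu _).ne'
      rw [integral_gpd_support_rpow hθ hβ0 hβ2 hu, Real.rpow_add_one hu.ne',
        show θ + β * t = θ * (1 + β * t / θ) by field_simp]
      generalize (1 + β * t / θ) ^ (-2 / β) = c at hc ⊢
      generalize 1 + β * t / θ = u
      have : -2 + β ≠ 0 := by linarith
      have : 2 - β ≠ 0 := by linarith
      field_simp
      ring

end GeneralizedPareto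

/-- **The product of dynamic survival extropy and hazard rate is constant for the GPD.**
For `θ > 0`, `β < 2`, `β ≠ 0`, the GPD with survival function `F̄(x) = (1+βx/θ)^(-1/β)`
and density `f(x) = (1/θ)(1+βx/θ)^(-1/β-1)` has hazard rate `h_F(t) = f(t)/F̄(t) = 1/(θ+βt)`
on the interior of the support, and the product `J_s(X;t)·h_F(t)` equals the constant
`1/(2(β-2))`, where `J_s(X;t) = -(1/2)∫_t^sup (F̄(x)/F̄(t))² dx` (the upper limit being
`∞` when `β > 0` and `-θ/β` when `β < 0`). -/
theorem gpd_extropy_hazard_product_constant (θ β t : ℝ) (hθ : 0 < θ) (hβ2 : β < 2)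
    (hβ0 : β ≠ 0) (ht : 0 < t) (ht' : β < 0 → t < -θ / β) :
    ((1 / θ) * (1 + β * t / θ) ^ (-1 / β - 1)) / (1 + β * t / θ) ^ (-1 / β) =
        1 / (θ + β * t) ∧
      (-(1 / 2) * ∫ x in (if 0 < β then Ioi t else Ioo t (-θ / β)),
            ((1 + β * x / θ) ^ (-1 / β) / (1 + β * t / θ) ^ (-1 / β)) ^ 2) *
          (((1 / θ) * (1 + β * t / θ) ^ (-1 / β - 1)) / (1 + β * t / θ) ^ (-1 / β)) =
        1 / (2 * (β - 2)) := by
  have hu : 0 < 1 + β * t / θ := by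
    rcases hβ0.lt_or_gt with hneg | hpos
    · exact one_add_mul_div_pos_of_lt_neg_div hθ hneg (ht' hneg)
    · positivity
  have hθβt : θ + β * t ≠ 0 := by
    rw [show θ + β * t = θ * (1 + β * t / θ) by field_simp]
    positivity
  rw [gpd_hazard_rate hθ.ne' hu, integral_gpd_survival_ratio_sq hθ hβ0 hβ2 hu]
  refine ⟨rfl, ?_⟩
  have : β - 2 ≠ 0 := by linarith
  have : 2 - β ≠ 0 := by linarith
  field_simp
  ring
end

section
/- Let T∈(0,∞], let S:[0,T)→(0,1] be a continuously differentiable survival function with S(0)=1 and S'(t)<0 on [0,T), with ∫₀^T S(x)² dx < ∞, and let h(t)=−S'(t)/S(t) be the associated hazard rate with h(0)>0. Suppose there is a constant k≠0 such that for all t∈[0,T), (−1/2)·(∫_t^T S(x)² dx)/S(t)² · h(t) = k. Then for all t∈[0,T), h(t) = 1/(c₁t+c₂), where c₁=(1+4k)/(2k) and c₂=1/h(0); that is, S is the survival function of a generalized Pareto distribution. -/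
/-!
With `J = dynamicSurvivalExtropy` and `h = hazardRate`, differentiating
`J(t) = -(1/2) (∫_t^T S²) / S(t)²` gives the identity `J' = 1/2 + 2 J h`. Under the hypothesis
`J h ≡ k` the derivative of `J` is the constant `1/2 + 2k`, so `J` is affine, and the hazard rate
`h = k / J` is the reciprocal of an affine function.
-/

open MeasureTheory Set

noncomputable def hazardRate (S S' : ℝ → ℝ) (t : ℝ) : ℝ := -S' t / S t

noncomputable def dynamicSurvivalExtropy (D : Set ℝ) (S : ℝ → ℝ) (t : ℝ) : ℝ :=
  -(1 / 2) * (∫ x in D ∩ Ioi t, S x ^ 2) / S t ^ 2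

theorem Convex.eq_add_smul_of_hasDerivWithinAt {E : Type*} [NormedAddCommGroup E]
    [NormedSpace ℝ E] {s : Set ℝ} {f : ℝ → E} {c : E} {x y : ℝ} (hs : Convex ℝ s)
    (hf : ∀ z ∈ s, HasDerivWithinAt f c s z) (hx : x ∈ s) (hy : y ∈ s) :
    f y = f x + (y - x) • c := by
  have hg : ∀ z ∈ s, HasDerivWithinAt (fun u => f u - u • c) 0 s z := fun z hz =>
    ((hf z hz).sub ((hasDerivWithinAt_id z s).smul_const c)).congr_deriv (by simp)
  have h := hs.norm_image_sub_le_of_norm_hasDerivWithin_le hg (fun _ _ => le_of_eq norm_zero) hx hy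
  rw [zero_mul, norm_le_zero_iff, sub_eq_zero, sub_eq_sub_iff_add_eq_add] at h
  rw [sub_smul, add_sub, ← h, add_sub_cancel_right]

section TailIntegral

variable {D : Set ℝ} {f : ℝ → ℝ}

theorem setIntegral_inter_Ioi_eq_intervalIntegral_add (hD : D.OrdConnected)
    (hDm : MeasurableSet D) (hf : IntegrableOn f D) {a t : ℝ} (ha : a ∈ D) (ht : t ∈ D)
    (hat : a ≤ t) :
    ∫ x in D ∩ Ioi a, f x = (∫ x in a..t, f x) + ∫ x in D ∩ Ioi t, f x := by
  have hIoc : Ioc a t ⊆ D := Ioc_subset_Icc_self.trans (hD.out ha ht)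
  have hsplit : D ∩ Ioi a = Ioc a t ∪ (D ∩ Ioi t) := by
    ext x
    constructor
    · rintro ⟨hxD, hax⟩
      rcases le_or_gt x t with hxt | htx
      exacts [Or.inl ⟨hax, hxt⟩, Or.inr ⟨hxD, htx⟩]
    · rintro (hx | ⟨hxD, htx⟩)
      exacts [⟨hIoc hx, hx.1⟩, ⟨hxD, hat.trans_lt htx⟩]
  have hdisj : Disjoint (Ioc a t) (D ∩ Ioi t) :=
    disjoint_left.2 fun _ hx hx' => not_lt.2 hx.2 hx'.2
  rw [hsplit, setIntegral_union hdisj (hDm.inter measurableSet_Ioi) (hf.mono_set hIoc)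
    (hf.mono_set inter_subset_left), intervalIntegral.integral_of_le hat]

theorem hasDerivWithinAt_setIntegral_inter_Ioi (hD : D.OrdConnected) (hDm : MeasurableSet D)
    (hf : IntegrableOn f D) (hfc : ContinuousOn f D) {a b t : ℝ} (ha : a ∈ D) (hb : b ∈ D)
    (ht : t ∈ Icc a b) :
    HasDerivWithinAt (fun u => ∫ x in D ∩ Ioi u, f x) (-f t) (Icc a b) t := by
  have hab : Icc a b ⊆ D := hD.out ha hb
  have hfab : ContinuousOn f (Icc a b) := hfc.mono hab
  have hsplit : ∀ u ∈ Icc a b,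
      ∫ x in D ∩ Ioi u, f x = (∫ x in D ∩ Ioi a, f x) - ∫ x in a..u, f x := fun u hu => by
    rw [setIntegral_inter_Ioi_eq_intervalIntegral_add hD hDm hf ha (hab hu) hu.1]
    ring
  have : Fact (t ∈ Icc a b) := ⟨ht⟩
  have hFTC : HasDerivWithinAt (fun u => ∫ x in a..u, f x) (f t) (Icc a b) t :=
    intervalIntegral.integral_hasDerivWithinAt_right
      ((hfab.mono (Icc_subset_Icc_right ht.2)).intervalIntegrable_of_Icc ht.1)
      (hfab.stronglyMeasurableAtFilter_nhdsWithin measurableSet_Icc t) (hfab t ht)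
  exact (hFTC.const_sub _).congr hsplit (hsplit t ht)

end TailIntegral

theorem hasDerivWithinAt_dynamicSurvivalExtropy {D s : Set ℝ} {S S' : ℝ → ℝ} {t : ℝ}
    (hS : HasDerivWithinAt S (S' t) s t)
    (hG : HasDerivWithinAt (fun u => ∫ x in D ∩ Ioi u, S x ^ 2) (-(S t ^ 2)) s t)
    (hSt : S t ≠ 0) :
    HasDerivWithinAt (dynamicSurvivalExtropy D S)
      (1 / 2 + 2 * (dynamicSurvivalExtropy D S t * hazardRate S S' t)) s t := by
  refine ((hG.const_mul (-(1 / 2))).div (hS.pow 2) (pow_ne_zero 2 hSt)).congr_deriv ?_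
  simp only [dynamicSurvivalExtropy, hazardRate, Pi.pow_apply]
  field_simp
  ring

theorem hazard_const_extropy_implies_gpd_general
    (T : EReal) (hT : 0 < T)
    (S S' : ℝ → ℝ) (D : Set ℝ) (hD : D = {x : ℝ | 0 ≤ x ∧ (x : EReal) < T})
    (hSrange : ∀ t ∈ D, 0 < S t ∧ S t ≤ 1)
    (hderiv : ∀ t ∈ D, HasDerivAt S (S' t) t)
    (hint : IntegrableOn (fun x => S x ^ 2) D)
    (k : ℝ) (hk : k ≠ 0)
    (hconst : ∀ t ∈ D,
      -(1 / 2) * (∫ x in D ∩ Ioi t, S x ^ 2) / S t ^ 2 * (-S' t / S t) = k) :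
    ∀ t ∈ D, -S' t / S t = 1 / ((1 + 4 * k) / (2 * k) * t + 1 / (-S' 0 / S 0)) := by
  intro t ht
  set J := dynamicSurvivalExtropy D S
  have hJh : ∀ u ∈ D, J u * hazardRate S S' u = k := hconst
  have h0 : (0 : ℝ) ∈ D := hD ▸ ⟨le_rfl, mod_cast hT⟩
  have hDoc : D.OrdConnected := hD ▸ ⟨fun _ hx _ hy _ hz =>
    ⟨hx.1.trans hz.1, (EReal.coe_le_coe_iff.2 hz.2).trans_lt hy.2⟩⟩
  have hDm : MeasurableSet D := hD ▸ (measurableSet_le measurable_const measurable_id).inter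
    (measurableSet_lt continuous_coe_real_ereal.measurable measurable_const)
  have ht0 : 0 ≤ t := by rw [hD] at ht; exact ht.1
  have hSc : ContinuousOn (fun x => S x ^ 2) D := fun u hu =>
    ((hderiv u hu).continuousAt.pow 2).continuousWithinAt
  have hJ : ∀ u ∈ Icc 0 t, HasDerivWithinAt J (1 / 2 + 2 * k) (Icc 0 t) u := fun u hu => by
    have hu' : u ∈ D := hDoc.out h0 ht hu
    rw [← hJh u hu']
    exact hasDerivWithinAt_dynamicSurvivalExtropy
      (hderiv u hu').hasDerivWithinAt
      (hasDerivWithinAt_setIntegral_inter_Ioi hDoc hDm hint hSc h0 ht hu) (hSrange u hu').1.ne'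
  have hJ_affine : J t = J 0 + t * (1 / 2 + 2 * k) := by
    simpa using (convex_Icc 0 t).eq_add_smul_of_hasDerivWithinAt hJ (left_mem_Icc.2 ht0)
      (right_mem_Icc.2 ht0)
  have hh : ∀ u ∈ D, hazardRate S S' u = k / J u := fun u hu =>
    eq_div_of_mul_eq (left_ne_zero_of_mul (hJh u hu ▸ hk)) (by rw [mul_comm, hJh u hu])
  have hdenom : (1 + 4 * k) / (2 * k) * t + J 0 / k = J t / k := by
    rw [hJ_affine]
    field_simp
    ring
  change hazardRate S S' t = 1 / (_ * t + 1 / hazardRate S S' 0)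
  rw [hh t ht, hh 0 h0, one_div_div, hdenom, one_div_div]

/-- **Constant extropy-hazard product characterizes the GPD hazard rate.**
Let `T ∈ (0,∞]`, let `S : [0,T) → (0,1]` be a continuously differentiable survival
function with `S(0) = 1` and `S' < 0` on `[0,T)`, with `∫₀^T S² < ∞`, and let
`h = -S'/S` be the hazard rate with `h(0) > 0`. If there is a constant `k ≠ 0` with
`(-1/2)·(∫_t^T S(x)² dx)/S(t)² · h(t) = k` for all `t ∈ [0,T)`, then
`h(t) = 1/(c₁t + c₂)` with `c₁ = (1+4k)/(2k)` and `c₂ = 1/h(0)`; i.e. `S` is the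
survival function of a generalized Pareto distribution. -/
theorem hazard_const_extropy_implies_gpd
    (T : EReal) (hT : 0 < T)
    (S S' : ℝ → ℝ) (D : Set ℝ) (hD : D = {x : ℝ | 0 ≤ x ∧ (x : EReal) < T})
    (hS0 : S 0 = 1)
    (hSrange : ∀ t ∈ D, 0 < S t ∧ S t ≤ 1)
    (hderiv : ∀ t ∈ D, HasDerivAt S (S' t) t)
    (hS'cont : ContinuousOn S' D)
    (hS'neg : ∀ t ∈ D, S' t < 0)
    (hint : IntegrableOn (fun x => S x ^ 2) D)
    (hh0 : 0 < -S' 0 / S 0)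
    (k : ℝ) (hk : k ≠ 0)
    (hconst : ∀ t ∈ D,
      -(1 / 2) * (∫ x in D ∩ Ioi t, S x ^ 2) / S t ^ 2 * (-S' t / S t) = k) :
    ∀ t ∈ D, -S' t / S t = 1 / ((1 + 4 * k) / (2 * k) * t + 1 / (-S' 0 / S 0)) :=
  hazard_const_extropy_implies_gpd_general T hT S S' D hD hSrange hderiv hint k hk hconst
end

section
/- Let θ>0 and β>0, and let X₁, X₂, X₃ be i.i.d. positive random variables with common continuous cumulative distribution function F. Then the Cramér–von Mises type measure Δ_P = ∫₀^∞ (E[((β+1)/(θ+βX₁))·min(X₁,t)] − F(t))² dF(t) satisfies Δ_P = (β+1)²·E[min(X₁,X₃)·min(X₂,X₃)/((θ+βX₁)(θ+βX₂))] − (β+1)·E[min(X₁,max(X₂,X₃))/(θ+βX₁)] + 1/3. -/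
/-!
Write `F = cdf μ` and `G t = (β + 1) ∫ min x t / (θ + β x) dμ(x)`, so that
`Δ_P = ∫ G² - 2 ∫ G F + ∫ F²`. Fubini turns `∫ G²` into the first triple integral. As `μ` has
no atoms, `max X₂ X₃` has law `2 F dF`, i.e. `E[g (max X₂ X₃)] = 2 ∫ g F dμ`; with `g = min x ·`
and Fubini again this identifies `2 ∫ G F` with the second term. Finally, continuity of `F` makes
`F(X₁)` uniform on `(0, 1]`, whence `∫ F² dμ = 1/3`.
-/

open MeasureTheory ProbabilityTheory Set Filter Topology Function

section CDF

variable {μ : Measure ℝ}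

lemma norm_cdf_le_one (x : ℝ) : ‖cdf μ x‖ ≤ 1 := by
  rw [Real.norm_of_nonneg (cdf_nonneg μ x)]
  exact cdf_le_one μ x

variable [IsProbabilityMeasure μ]

lemma cdf_eq_toReal (x : ℝ) : cdf μ x = (μ (Iic x)).toReal := cdf_eq_real μ x

lemma memLp_cdf (p : ENNReal) : MemLp (cdf μ) p μ :=
  .of_bound (cdf μ).mono.measurable.aestronglyMeasurable 1 (ae_of_all _ norm_cdf_le_one)

lemma nullSingletonClass_of_continuous_cdf (hcont : Continuous (cdf μ)) : NullSingletonClass μ :=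
  ⟨fun a => by
    rw [← measure_cdf μ, StieltjesFunction.measure_singleton,
      hcont.continuousWithinAt.leftLim_eq, sub_self, ENNReal.ofReal_zero]⟩

lemma measure_cdf_le (hcont : Continuous (cdf μ)) {c : ℝ} (hc : c < 1) :
    μ {x | cdf μ x ≤ c} = ENNReal.ofReal c := by
  set S := {x | cdf μ x ≤ c}
  rcases S.eq_empty_or_nonempty with hS | hS
  · have hc0 : c ≤ 0 := ge_of_tendsto (tendsto_cdf_atBot μ) <| Eventually.of_forall fun x =>
      (not_le.1 (eq_empty_iff_forall_notMem.1 hS x)).le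
    rw [hS, measure_empty, ENNReal.ofReal_of_nonpos hc0]
  obtain ⟨T, hT⟩ := ((tendsto_cdf_atTop μ).eventually (lt_mem_nhds hc)).exists_forall_of_atTop
  have hbdd : BddAbove S := ⟨T, fun x hx => le_of_not_gt fun hTx => (hT x hTx.le).not_ge hx⟩
  have hclosed : IsClosed S := isClosed_le hcont continuous_const
  have hlower : IsLowerSet S := fun _ _ hba ha => ((cdf μ).mono hba).trans ha
  have hSeq : S = Iic (sSup S) := by
    rw [← lowerClosure_eq_Iic_csSup hS hbdd hclosed, hlower.lowerClosure]
  -- Just right of `sSup S` the cdf exceeds `c`, so by continuity it equals `c` at `sSup S`.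
  have hc_le : c ≤ cdf μ (sSup S) :=
    ge_of_tendsto (x := 𝓝[>] sSup S) (hcont.continuousAt.tendsto.mono_left nhdsWithin_le_nhds)
      (eventually_nhdsWithin_of_forall fun x hx =>
        le_of_lt <| not_le.1 fun hxS => (le_csSup hbdd hxS).not_gt hx)
  rw [hSeq, ← ofReal_cdf μ, le_antisymm (hclosed.csSup_mem hS hbdd) hc_le]

lemma map_cdf_eq_volume_restrict (hcont : Continuous (cdf μ)) :
    μ.map (cdf μ) = volume.restrict (Ioc 0 1) := by
  have hmeas : Measurable (cdf μ) := (cdf μ).mono.measurable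
  have : IsProbabilityMeasure (μ.map (cdf μ)) := Measure.isProbabilityMeasure_map hmeas.aemeasurable
  refine Measure.ext_of_Iic _ _ fun c => ?_
  rw [Measure.map_apply hmeas measurableSet_Iic, Measure.restrict_apply measurableSet_Iic]
  rcases lt_or_ge c 1 with hc | hc
  · rw [Iic_inter_Ioc_of_le hc.le, Real.volume_Ioc, sub_zero]
    exact measure_cdf_le hcont hc
  · have hpre : cdf μ ⁻¹' Iic c = univ := eq_univ_of_forall fun x => (cdf_le_one μ x).trans hc
    rw [inter_eq_right.2 (Ioc_subset_Iic_self.trans (Iic_subset_Iic.2 hc)), hpre]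
    simp

lemma integral_cdf_sq (hcont : Continuous (cdf μ)) : ∫ x, cdf μ x ^ 2 ∂μ = 1 / 3 := by
  have hmeas : Measurable (cdf μ) := (cdf μ).mono.measurable
  rw [← integral_map (f := fun u : ℝ => u ^ 2) hmeas.aemeasurable (by fun_prop),
    map_cdf_eq_volume_restrict hcont, ← intervalIntegral.integral_of_le zero_le_one,
    integral_pow]
  norm_num

end CDF

section Product

variable {α β : Type*} [MeasurableSpace α] [MeasurableSpace β]

lemma measure_prod_diagonal_eq_zero [MeasurableEq α] (μ ν : Measure α) [SFinite ν]
    [NullSingletonClass ν] : μ.prod ν (diagonal α) = 0 := by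
  rw [Measure.prod_apply measurableSet_diagonal]
  simp [preimage, diagonal]

lemma integral_sub_sq {μ : Measure α} {f g : α → ℝ} (hf : MemLp f 2 μ) (hg : MemLp g 2 μ) :
    ∫ x, (f x - g x) ^ 2 ∂μ = ∫ x, f x ^ 2 ∂μ - 2 * ∫ x, f x * g x ∂μ + ∫ x, g x ^ 2 ∂μ := by
  have hfg : Integrable (fun x => 2 * (f x * g x)) μ := (hf.integrable_mul hg).const_mul 2
  have hdiff : Integrable (fun x => f x ^ 2 - 2 * (f x * g x)) μ := hf.integrable_sq.sub hfg
  simp_rw [sub_sq, mul_assoc]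
  rw [integral_add hdiff hg.integrable_sq, integral_sub hf.integrable_sq hfg, integral_const_mul]

lemma integral_sq_integral {μ : Measure α} {ν : Measure β} [SFinite μ] [SFinite ν]
    {h : α → β → ℝ}
    (hint : Integrable (uncurry fun t (p : α × α) => h p.1 t * h p.2 t) (ν.prod (μ.prod μ))) :
    ∫ t, (∫ x, h x t ∂μ) ^ 2 ∂ν = ∫ x, ∫ y, ∫ t, h x t * h y t ∂ν ∂μ ∂μ := by
  calc ∫ t, (∫ x, h x t ∂μ) ^ 2 ∂ν = ∫ t, ∫ p, h p.1 t * h p.2 t ∂μ.prod μ ∂ν := by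
        congr with t
        exact (sq _).trans (integral_prod_mul (fun x => h x t) (fun x => h x t)).symm
    _ = ∫ p, ∫ t, h p.1 t * h p.2 t ∂ν ∂μ.prod μ := integral_integral_swap hint
    _ = ∫ x, ∫ y, ∫ t, h x t * h y t ∂ν ∂μ ∂μ := integral_prod _ hint.swap.integral_prod_left

lemma integral_integral_comp_max {μ : Measure ℝ} [IsProbabilityMeasure μ] [NullSingletonClass μ]
    {g : ℝ → ℝ} (hg : Integrable g μ) :
    ∫ y, ∫ z, g (max y z) ∂μ ∂μ = 2 * ∫ y, g y * cdf μ y ∂μ := by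
  set r : ℝ × ℝ → ℝ := {p | p.2 < p.1}.indicator fun p => g p.1
  have hr : Integrable r (μ.prod μ) :=
    (hg.comp_fst μ).indicator (measurableSet_lt measurable_snd measurable_fst)
  have hsplit : (fun p : ℝ × ℝ => g (max p.1 p.2)) =ᵐ[μ.prod μ] fun p => r p + r p.swap := by
    have hoff : ∀ᵐ p ∂μ.prod μ, p ∉ diagonal ℝ :=
      measure_eq_zero_iff_ae_notMem.1 (measure_prod_diagonal_eq_zero μ μ)
    -- Off the diagonal exactly one of `r p`, `r p.swap` is nonzero.
    filter_upwards [hoff] with p hp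
    rcases lt_or_gt_of_ne hp with h | h
    · simp [r, h, h.not_gt, max_eq_right h.le]
    · simp [r, h, h.not_gt, max_eq_left h.le]
  have hinner (y : ℝ) : ∫ z, r (y, z) ∂μ = g y * cdf μ y := by
    change ∫ z, (Iio y).indicator (fun _ => g y) z ∂μ = _
    rw [integral_indicator_const _ measurableSet_Iio, smul_eq_mul, mul_comm,
      measureReal_congr Iio_ae_eq_Iic, cdf_eq_real]
  calc ∫ y, ∫ z, g (max y z) ∂μ ∂μ = ∫ p, g (max p.1 p.2) ∂μ.prod μ :=
        (integral_prod _ ((hr.add hr.swap).congr hsplit.symm)).symm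
    _ = ∫ p, r p ∂μ.prod μ + ∫ p, r p.swap ∂μ.prod μ :=
        (integral_congr_ae hsplit).trans (integral_add hr hr.swap)
    _ = 2 * ∫ y, g y * cdf μ y ∂μ := by
        rw [integral_prod_swap, two_mul, integral_prod _ hr]
        simp_rw [hinner]

lemma integral_integral_integral_comp_max {μ : Measure ℝ} [IsProbabilityMeasure μ]
    [NullSingletonClass μ] {ν : Measure α} [SFinite ν] {h : α → ℝ → ℝ}
    (hint : Integrable (uncurry h) (ν.prod μ)) :
    ∫ x, ∫ y, ∫ z, h x (max y z) ∂μ ∂μ ∂ν = 2 * ∫ t, (∫ x, h x t ∂ν) * cdf μ t ∂μ := by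
  have hint' : Integrable (uncurry fun x t => h x t * cdf μ t) (ν.prod μ) :=
    hint.mul_bdd (c := 1) ((cdf μ).mono.measurable.comp measurable_snd).aestronglyMeasurable
      (ae_of_all _ fun p => norm_cdf_le_one p.2)
  calc ∫ x, ∫ y, ∫ z, h x (max y z) ∂μ ∂μ ∂ν = ∫ x, 2 * ∫ t, h x t * cdf μ t ∂μ ∂ν :=
        integral_congr_ae (hint.prod_right_ae.mono fun x hx => integral_integral_comp_max hx)
    _ = 2 * ∫ t, (∫ x, h x t ∂ν) * cdf μ t ∂μ := by
        rw [integral_const_mul, integral_integral_swap hint']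
        simp_rw [integral_mul_const]

end Product

section WeightedMin

noncomputable def weightedMin (θ β x t : ℝ) : ℝ := min x t / (θ + β * x)

variable {θ β : ℝ}

lemma measurable_weightedMin : Measurable (uncurry (weightedMin θ β)) := by
  unfold weightedMin uncurry
  fun_prop

lemma abs_weightedMin_le (hθ : 0 ≤ θ) (hβ : 0 < β) {x t : ℝ} (hx : 0 < x) (ht : 0 ≤ t) :
    |weightedMin θ β x t| ≤ β⁻¹ := by
  have hβx : 0 < β * x := mul_pos hβ hx
  rw [weightedMin, abs_of_nonneg (div_nonneg (le_min hx.le ht) (by positivity)),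
    div_le_iff₀ (by positivity), inv_mul_eq_div, le_div_iff₀ hβ]
  nlinarith [min_le_left x t]

variable {μ : Measure ℝ} [IsFiniteMeasure μ]

lemma integrable_weightedMin (hθ : 0 ≤ θ) (hβ : 0 < β) (hμ : ∀ᵐ x ∂μ, 0 < x) :
    Integrable (uncurry (weightedMin θ β)) (μ.prod μ) := by
  refine Integrable.mono' (integrable_const β⁻¹) measurable_weightedMin.aestronglyMeasurable ?_
  filter_upwards [Measure.quasiMeasurePreserving_fst.ae hμ,
    Measure.quasiMeasurePreserving_snd.ae hμ] with p hx ht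
  exact abs_weightedMin_le hθ hβ hx ht.le

lemma integrable_weightedMin_mul_weightedMin (hθ : 0 ≤ θ) (hβ : 0 < β) (hμ : ∀ᵐ x ∂μ, 0 < x) :
    Integrable (uncurry fun t (p : ℝ × ℝ) => weightedMin θ β p.1 t * weightedMin θ β p.2 t)
      (μ.prod (μ.prod μ)) := by
  have hmeas : Measurable
      (uncurry fun t (p : ℝ × ℝ) => weightedMin θ β p.1 t * weightedMin θ β p.2 t) := by
    unfold weightedMin uncurry
    fun_prop
  refine Integrable.mono' (integrable_const (β⁻¹ * β⁻¹)) hmeas.aestronglyMeasurable ?_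
  filter_upwards [Measure.quasiMeasurePreserving_fst.ae hμ,
    (Measure.quasiMeasurePreserving_fst.comp Measure.quasiMeasurePreserving_snd).ae hμ,
    (Measure.quasiMeasurePreserving_snd.comp Measure.quasiMeasurePreserving_snd).ae hμ]
    with q ht hx hy
  simp only [uncurry_def, norm_mul]
  exact mul_le_mul (abs_weightedMin_le hθ hβ hx ht.le) (abs_weightedMin_le hθ hβ hy ht.le)
    (norm_nonneg _) (by positivity)

lemma memLp_integral_weightedMin (hθ : 0 ≤ θ) (hβ : 0 < β) (hμ : ∀ᵐ x ∂μ, 0 < x) :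
    MemLp (fun t => ∫ x, weightedMin θ β x t ∂μ) 2 μ := by
  refine MemLp.of_bound
    (measurable_weightedMin.stronglyMeasurable.integral_prod_left).aestronglyMeasurable
    (β⁻¹ * μ.real univ) (hμ.mono fun t ht => norm_integral_le_of_norm_le_const ?_)
  exact hμ.mono fun x hx => abs_weightedMin_le hθ hβ hx ht.le

end WeightedMin

/-- **Decomposition of the Cramér–von Mises type measure `Δ_P`.**
Let `θ > 0`, `β > 0`, and let `X₁, X₂, X₃` be i.i.d. positive random variables with
common continuous CDF `F` (here represented by their common law `μ` on `ℝ`, supported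
on `(0,∞)`, with `F t = μ(Iic t)`). Then
`Δ_P = ∫₀^∞ (E[((β+1)/(θ+βX₁))·min(X₁,t)] - F(t))² dF(t)` equals
`(β+1)²·E[min(X₁,X₃)min(X₂,X₃)/((θ+βX₁)(θ+βX₂))]
  - (β+1)·E[min(X₁,max(X₂,X₃))/(θ+βX₁)] + 1/3`. -/
theorem deltaP_decomposition (θ β : ℝ) (hθ : 0 < θ) (hβ : 0 < β)
    (μ : Measure ℝ) [IsProbabilityMeasure μ]
    (hpos : μ (Iic 0) = 0)
    (hcont : Continuous fun t => (μ (Iic t)).toReal) :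
    ∫ t, ((∫ x, ((β + 1) / (θ + β * x)) * min x t ∂μ) - (μ (Iic t)).toReal) ^ 2 ∂μ =
      (β + 1) ^ 2 *
          (∫ x, ∫ y, ∫ z, min x z * min y z / ((θ + β * x) * (θ + β * y)) ∂μ ∂μ ∂μ) -
        (β + 1) * (∫ x, ∫ y, ∫ z, min x (max y z) / (θ + β * x) ∂μ ∂μ ∂μ) + 1 / 3 := by
  simp_rw [← cdf_eq_toReal] at hcont ⊢
  have := nullSingletonClass_of_continuous_cdf hcont
  have hμ : ∀ᵐ x ∂μ, 0 < x := (measure_eq_zero_iff_ae_notMem.1 hpos).mono fun _ hx => not_le.1 hx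
  have hG (t : ℝ) : ∫ x, (β + 1) / (θ + β * x) * min x t ∂μ
      = (β + 1) * ∫ x, weightedMin θ β x t ∂μ := by
    rw [← integral_const_mul]
    congr with x
    rw [weightedMin, mul_div_assoc', div_mul_eq_mul_div]
  have hsq : ∫ t, (∫ x, weightedMin θ β x t ∂μ) ^ 2 ∂μ
      = ∫ x, ∫ y, ∫ z, min x z * min y z / ((θ + β * x) * (θ + β * y)) ∂μ ∂μ ∂μ := by
    rw [integral_sq_integral (integrable_weightedMin_mul_weightedMin hθ.le hβ hμ)]
    simp only [weightedMin, div_mul_div_comm]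
  have hmax : ∫ x, ∫ y, ∫ z, min x (max y z) / (θ + β * x) ∂μ ∂μ ∂μ
      = 2 * ∫ t, (∫ x, weightedMin θ β x t ∂μ) * cdf μ t ∂μ :=
    integral_integral_integral_comp_max (integrable_weightedMin hθ.le hβ hμ)
  simp only [hG]
  rw [integral_sub_sq ((memLp_integral_weightedMin hθ.le hβ hμ).const_mul _) (memLp_cdf 2),
    integral_cdf_sq hcont, hmax]
  simp only [mul_pow, mul_assoc, integral_const_mul]
  rw [hsq]
  ring
end
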